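/- For a nonzero generalized Euclidean distance matrix D, the matrix -PD†P is symmetric positive semidefinite, where P = I - (1/n)J is the orthogonal projection onto 1⊥. Consequently x'D†x ≤ 0 for every x orthogonal to 1. -/

import Mathlib

/-!
Write `G = a² d 1ᵀ + b² 1 dᵀ - 2ab L` with `d = diag L`, and put `s = 1ᵀu`, `m = dᵀu`.
Because `L1 = 0`, `1ᵀGu = a² (tr L) s + b² n m` and
`uᵀGv = a² s(v) m(u) + b² m(v) s(u) - 2ab uᵀLv`. On the hyperplane `1ᵀGu = 0` the first identity
forces `s m ≤ 0`, so `uᵀGu ≤ 0`, and confines `(s, m)` to a line, so `uᵀGv` is symmetric there.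
The same identities give `ker G = ker Gᵀ`, hence `G G† = G† G` and `xᵀG†y = (G†y)ᵀ G (G†x)`;
moreover `1ᵀG G†x = 1ᵀx` since `ker Gᵀ ⊥ 1`. So `G†x` lies on the hyperplane whenever `x ⊥ 1`,
and both properties pass to `G†` on `1⊥`, onto which `P` projects.
-/

open Matrix

/-- `Dp` is the Moore-Penrose inverse of `D`. -/
def IsMoorePenrose {n : ℕ} (D Dp : Matrix (Fin n) (Fin n) ℝ) : Prop :=
  D * Dp * D = D ∧ Dp * D * Dp = Dp ∧ (D * Dp)ᵀ = D * Dp ∧ (Dp * D)ᵀ = Dp * D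

variable {ι : Type*}

lemma Matrix.nonempty_of_ne_zero {m n α : Type*} [Zero α] {A : Matrix m n α} (hA : A ≠ 0) :
    Nonempty m := by
  by_contra h
  exact hA (ext fun i => (not_nonempty_iff.1 h).elim i)

lemma Matrix.mul_eq_self_of_ker_subset {m n R : Type*} [Fintype n] [CommRing R]
    {A B : Matrix m n R} {M : Matrix n n R} (hker : ∀ u, A *ᵥ u = 0 → B *ᵥ u = 0)
    (hA : A * M = A) : B * M = B := by
  refine ext_iff_mulVec.2 fun u => ?_
  have := hker (u - M *ᵥ u) (by rw [mulVec_sub, mulVec_mulVec, hA, sub_self])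
  rw [mulVec_sub, mulVec_mulVec, sub_eq_zero] at this
  exact this.symm

def gedm (L : Matrix ι ι ℝ) (a b : ℝ) : Matrix ι ι ℝ :=
  of fun i j => a ^ 2 * L i i + b ^ 2 * L j j - 2 * a * b * L i j

section Gedm

variable {L : Matrix ι ι ℝ} (a b : ℝ)

theorem transpose_gedm (hL : L.IsSymm) : (gedm L a b)ᵀ = gedm L b a := by
  ext i j
  simp only [transpose_apply, gedm, of_apply, hL.apply i j]
  ring

variable [Fintype ι]

theorem gedm_mulVec (x : ι → ℝ) :
    gedm L a b *ᵥ x =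
      (a ^ 2 * (1 ⬝ᵥ x)) • L.diag + (b ^ 2 * (L.diag ⬝ᵥ x)) • 1 - (2 * a * b) • (L *ᵥ x) := by
  ext i
  simp only [gedm, mulVec, dotProduct, of_apply, Pi.sub_apply, Pi.add_apply, Pi.smul_apply,
    smul_eq_mul, diag_apply, Pi.one_apply, one_mul, sub_mul, add_mul, Finset.sum_sub_distrib,
    Finset.sum_add_distrib, Finset.mul_sum, Finset.sum_mul, mul_one]
  ring_nf

theorem dotProduct_gedm_mulVec (x y : ι → ℝ) :
    x ⬝ᵥ gedm L a b *ᵥ y = a ^ 2 * (1 ⬝ᵥ y) * (L.diag ⬝ᵥ x) + b ^ 2 * (L.diag ⬝ᵥ y) * (1 ⬝ᵥ x)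
      - 2 * a * b * (x ⬝ᵥ L *ᵥ y) := by
  rw [gedm_mulVec, dotProduct_sub, dotProduct_add, dotProduct_smul, dotProduct_smul,
    dotProduct_smul, dotProduct_comm x L.diag, dotProduct_comm x 1]
  simp only [smul_eq_mul]

theorem one_dotProduct_gedm_mulVec (hL : L.IsSymm) (hL1 : L *ᵥ 1 = 0) (x : ι → ℝ) :
    1 ⬝ᵥ gedm L a b *ᵥ x = a ^ 2 * L.trace * (1 ⬝ᵥ x) + b ^ 2 * Fintype.card ι * (L.diag ⬝ᵥ x) := by
  have hLx : (1 : ι → ℝ) ⬝ᵥ L *ᵥ x = 0 := by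
    rw [← dotProduct_transpose_mulVec, hL.eq, hL1, dotProduct_zero]
  rw [dotProduct_gedm_mulVec, hLx, one_dotProduct_one, dotProduct_one L.diag, trace]
  ring

theorem one_dotProduct_mul_diag_dotProduct_eq (hL : L.IsSymm) (hL1 : L *ᵥ 1 = 0) {u : ι → ℝ}
    (hu : 1 ⬝ᵥ gedm L a b *ᵥ u = 0) :
    b ^ 2 * Fintype.card ι * ((1 ⬝ᵥ u) * (L.diag ⬝ᵥ u)) = -(a ^ 2 * L.trace * (1 ⬝ᵥ u) ^ 2) := by
  linear_combination (1 ⬝ᵥ u) * ((one_dotProduct_gedm_mulVec a b hL hL1 u).symm.trans hu)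

theorem one_dotProduct_mul_diag_dotProduct_nonpos [Nonempty ι] (hL : L.PosSemidef)
    (hL1 : L *ᵥ 1 = 0) {a b : ℝ} (hb : b ≠ 0) {u : ι → ℝ} (hu : 1 ⬝ᵥ gedm L a b *ᵥ u = 0) :
    (1 ⬝ᵥ u) * (L.diag ⬝ᵥ u) ≤ 0 := by
  have key := one_dotProduct_mul_diag_dotProduct_eq a b (isHermitian_iff_isSymm.1 hL.1) hL1 hu
  have hbN : 0 < b ^ 2 * Fintype.card ι := by
    have : (0 : ℝ) < Fintype.card ι := by exact_mod_cast Fintype.card_pos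
    positivity
  refine nonpos_of_mul_nonpos_right (key ▸ neg_nonpos.2 ?_) hbN
  exact mul_nonneg (mul_nonneg (sq_nonneg a) hL.trace_nonneg) (sq_nonneg _)

theorem dotProduct_gedm_mulVec_self_nonpos [Nonempty ι] (hL : L.PosSemidef) (hL1 : L *ᵥ 1 = 0)
    {a b : ℝ} (ha : 0 < a) (hb : 0 < b) {u : ι → ℝ} (hu : 1 ⬝ᵥ gedm L a b *ᵥ u = 0) :
    u ⬝ᵥ gedm L a b *ᵥ u ≤ 0 := by
  have hsm := one_dotProduct_mul_diag_dotProduct_nonpos hL hL1 hb.ne' hu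
  have hq : 0 ≤ u ⬝ᵥ L *ᵥ u := by simpa using hL.dotProduct_mulVec_nonneg u
  rw [dotProduct_gedm_mulVec]
  nlinarith [mul_pos ha hb]

theorem gedm_mulVec_eq_zero_iff (hL : L.PosSemidef) (hL1 : L *ᵥ 1 = 0) (hL0 : L ≠ 0)
    {a b : ℝ} (ha : 0 < a) (hb : 0 < b) (u : ι → ℝ) :
    gedm L a b *ᵥ u = 0 ↔ 1 ⬝ᵥ u = 0 ∧ L.diag ⬝ᵥ u = 0 ∧ L *ᵥ u = 0 := by
  refine ⟨fun hu => ?_, fun ⟨hs, hm, hLu⟩ => by simp [gedm_mulVec, hs, hm, hLu]⟩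
  have := nonempty_of_ne_zero hL0
  have hτ : 0 < L.trace :=
    hL.trace_nonneg.lt_of_ne fun h => hL0 (hL.trace_eq_zero_iff.1 h.symm)
  have hsum : 1 ⬝ᵥ gedm L a b *ᵥ u = 0 := by rw [hu, dotProduct_zero]
  have hsm := one_dotProduct_mul_diag_dotProduct_nonpos hL hL1 hb.ne' hsum
  have key := one_dotProduct_mul_diag_dotProduct_eq a b (isHermitian_iff_isSymm.1 hL.1) hL1 hsum
  have hquad : u ⬝ᵥ gedm L a b *ᵥ u = 0 := by rw [hu, dotProduct_zero]
  rw [dotProduct_gedm_mulVec] at hquad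
  have hq : 0 ≤ u ⬝ᵥ L *ᵥ u := by simpa using hL.dotProduct_mulVec_nonneg u
  have hq0 : u ⬝ᵥ L *ᵥ u = 0 := by nlinarith [mul_pos ha hb]
  have hs : 1 ⬝ᵥ u = 0 := by
    have hsm0 : (1 ⬝ᵥ u) * (L.diag ⬝ᵥ u) = 0 := by
      refine (mul_eq_zero.1 ?_).resolve_left (by positivity : a ^ 2 + b ^ 2 ≠ 0)
      linear_combination hquad + 2 * a * b * hq0
    rw [hsm0, mul_zero, zero_eq_neg] at key
    simpa [ha.ne', hτ.ne'] using key
  have hm : L.diag ⬝ᵥ u = 0 := by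
    have := (one_dotProduct_gedm_mulVec a b (isHermitian_iff_isSymm.1 hL.1) hL1 u).symm.trans hsum
    simpa [hs, hb.ne', Fintype.card_ne_zero] using this
  exact ⟨hs, hm, (hL.dotProduct_mulVec_zero_iff u).1 (by simpa using hq0)⟩

theorem dotProduct_gedm_mulVec_comm [Nonempty ι] (hL : L.IsSymm) (hL1 : L *ᵥ 1 = 0) {a b : ℝ}
    (hb : b ≠ 0) {u v : ι → ℝ} (hu : 1 ⬝ᵥ gedm L a b *ᵥ u = 0)
    (hv : 1 ⬝ᵥ gedm L a b *ᵥ v = 0) : u ⬝ᵥ gedm L a b *ᵥ v = v ⬝ᵥ gedm L a b *ᵥ u := by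
  have hLuv : u ⬝ᵥ L *ᵥ v = v ⬝ᵥ L *ᵥ u := by
    simpa only [hL.eq] using dotProduct_transpose_mulVec L u v
  have hu' := (one_dotProduct_gedm_mulVec a b hL hL1 u).symm.trans hu
  have hv' := (one_dotProduct_gedm_mulVec a b hL hL1 v).symm.trans hv
  have hdet : (1 ⬝ᵥ u) * (L.diag ⬝ᵥ v) - (1 ⬝ᵥ v) * (L.diag ⬝ᵥ u) = 0 := by
    have hbN : b ^ 2 * Fintype.card ι ≠ 0 := by positivity
    refine (mul_eq_zero.1 ?_).resolve_left hbN
    linear_combination (1 ⬝ᵥ u) * hv' - (1 ⬝ᵥ v) * hu'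
  rw [dotProduct_gedm_mulVec, dotProduct_gedm_mulVec, hLuv]
  linear_combination (b ^ 2 - a ^ 2) * hdet

end Gedm

namespace IsMoorePenrose

variable {n : ℕ} {D Dp : Matrix (Fin n) (Fin n) ℝ}

theorem transpose_mul_mul (h : IsMoorePenrose D Dp) : Dᵀ * (D * Dp) = Dᵀ := by
  simpa only [transpose_mul, h.2.2.1] using congrArg transpose h.1

theorem mul_comm_of_ker_eq (h : IsMoorePenrose D Dp) (hker : ∀ u, D *ᵥ u = 0 ↔ Dᵀ *ᵥ u = 0) :
    D * Dp = Dp * D := by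
  have hQ : D * (D * Dp) = D :=
    mul_eq_self_of_ker_subset (fun u => (hker u).2) h.transpose_mul_mul
  have hR : Dᵀ * (Dp * D) = Dᵀ :=
    mul_eq_self_of_ker_subset (fun u => (hker u).1) (by rw [← Matrix.mul_assoc, h.1])
  have hR' : Dp * D * D = D := by
    simpa only [transpose_mul, h.2.2.2, transpose_transpose] using congrArg transpose hR
  calc D * Dp = Dp * D * D * Dp := by rw [hR']
    _ = Dp * (D * (D * Dp)) := by simp only [Matrix.mul_assoc]
    _ = Dp * D := by rw [hQ]

theorem dotProduct_mulVec_eq (h : IsMoorePenrose D Dp) (hc : D * Dp = Dp * D) (x y : Fin n → ℝ) :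
    x ⬝ᵥ Dp *ᵥ y = (Dp *ᵥ y) ⬝ᵥ D *ᵥ (Dp *ᵥ x) := by
  have hDp : Dpᵀ * Dᵀ * Dp = Dp := by rw [← transpose_mul, h.2.2.1, hc, h.2.1]
  calc x ⬝ᵥ Dp *ᵥ y = x ⬝ᵥ Dpᵀ *ᵥ (Dᵀ *ᵥ (Dp *ᵥ y)) := by
        rw [mulVec_mulVec, mulVec_mulVec, hDp]
    _ = (Dᵀ *ᵥ (Dp *ᵥ y)) ⬝ᵥ Dp *ᵥ x := dotProduct_transpose_mulVec _ _ _
    _ = (Dp *ᵥ y) ⬝ᵥ D *ᵥ (Dp *ᵥ x) := by rw [dotProduct_comm, dotProduct_transpose_mulVec]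

theorem dotProduct_mul_mulVec (h : IsMoorePenrose D Dp) {w : Fin n → ℝ}
    (hw : ∀ u, Dᵀ *ᵥ u = 0 → w ⬝ᵥ u = 0) (x : Fin n → ℝ) : w ⬝ᵥ D *ᵥ (Dp *ᵥ x) = w ⬝ᵥ x := by
  have := hw (x - (D * Dp) *ᵥ x) (by rw [mulVec_sub, mulVec_mulVec, h.transpose_mul_mul, sub_self])
  rw [dotProduct_sub, sub_eq_zero, ← mulVec_mulVec] at this
  exact this.symm

end IsMoorePenrose

section GedmPinv

variable {n : ℕ} {L Dp : Matrix (Fin n) (Fin n) ℝ} {a b : ℝ}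

theorem gedm_mul_pinv_comm (hL : L.PosSemidef) (hL1 : L *ᵥ 1 = 0) (hL0 : L ≠ 0) (ha : 0 < a)
    (hb : 0 < b) (hDp : IsMoorePenrose (gedm L a b) Dp) : gedm L a b * Dp = Dp * gedm L a b := by
  refine hDp.mul_comm_of_ker_eq fun u => ?_
  rw [transpose_gedm a b (isHermitian_iff_isSymm.1 hL.1), gedm_mulVec_eq_zero_iff hL hL1 hL0 ha hb,
    gedm_mulVec_eq_zero_iff hL hL1 hL0 hb ha]

theorem one_dotProduct_gedm_mulVec_pinv (hL : L.PosSemidef) (hL1 : L *ᵥ 1 = 0) (hL0 : L ≠ 0)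
    (ha : 0 < a) (hb : 0 < b) (hDp : IsMoorePenrose (gedm L a b) Dp) {x : Fin n → ℝ}
    (hx : 1 ⬝ᵥ x = 0) : 1 ⬝ᵥ gedm L a b *ᵥ (Dp *ᵥ x) = 0 := by
  refine (hDp.dotProduct_mul_mulVec (fun u hu => ?_) x).trans hx
  rw [transpose_gedm a b (isHermitian_iff_isSymm.1 hL.1)] at hu
  exact ((gedm_mulVec_eq_zero_iff hL hL1 hL0 hb ha u).1 hu).1

theorem dotProduct_pinv_mulVec_comm (hL : L.PosSemidef) (hL1 : L *ᵥ 1 = 0) (hL0 : L ≠ 0)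
    (ha : 0 < a) (hb : 0 < b) (hDp : IsMoorePenrose (gedm L a b) Dp) {x y : Fin n → ℝ}
    (hx : 1 ⬝ᵥ x = 0) (hy : 1 ⬝ᵥ y = 0) : x ⬝ᵥ Dp *ᵥ y = y ⬝ᵥ Dp *ᵥ x := by
  have := nonempty_of_ne_zero hL0
  have hc := gedm_mul_pinv_comm hL hL1 hL0 ha hb hDp
  rw [hDp.dotProduct_mulVec_eq hc, hDp.dotProduct_mulVec_eq hc]
  exact dotProduct_gedm_mulVec_comm (isHermitian_iff_isSymm.1 hL.1) hL1 hb.ne'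
    (one_dotProduct_gedm_mulVec_pinv hL hL1 hL0 ha hb hDp hy)
    (one_dotProduct_gedm_mulVec_pinv hL hL1 hL0 ha hb hDp hx)

theorem dotProduct_pinv_mulVec_self_nonpos (hL : L.PosSemidef) (hL1 : L *ᵥ 1 = 0) (hL0 : L ≠ 0)
    (ha : 0 < a) (hb : 0 < b) (hDp : IsMoorePenrose (gedm L a b) Dp) {x : Fin n → ℝ}
    (hx : 1 ⬝ᵥ x = 0) : x ⬝ᵥ Dp *ᵥ x ≤ 0 := by
  have := nonempty_of_ne_zero hL0
  rw [hDp.dotProduct_mulVec_eq (gedm_mul_pinv_comm hL hL1 hL0 ha hb hDp)]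
  exact dotProduct_gedm_mulVec_self_nonpos hL hL1 ha hb
    (one_dotProduct_gedm_mulVec_pinv hL hL1 hL0 ha hb hDp hx)

end GedmPinv

section Centering

variable (ι) [Fintype ι] [DecidableEq ι]

noncomputable def centeringMatrix : Matrix ι ι ℝ :=
  1 - (Fintype.card ι : ℝ)⁻¹ • of fun _ _ => 1

theorem transpose_centeringMatrix : (centeringMatrix ι)ᵀ = centeringMatrix ι := by
  ext i j
  simp [centeringMatrix, one_apply, eq_comm]

theorem one_dotProduct_centeringMatrix_mulVec [Nonempty ι] (x : ι → ℝ) :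
    1 ⬝ᵥ centeringMatrix ι *ᵥ x = 0 := by
  have hJ : (of fun _ _ => (1 : ℝ) : Matrix ι ι ℝ) *ᵥ x = (1 ⬝ᵥ x) • 1 := by
    ext i; simp [mulVec, dotProduct]
  rw [centeringMatrix, sub_mulVec, smul_mulVec, hJ, one_mulVec, dotProduct_sub, dotProduct_smul,
    dotProduct_smul, one_dotProduct_one, smul_eq_mul, smul_eq_mul, mul_comm (1 ⬝ᵥ x),
    inv_mul_cancel_left₀ (Nat.cast_ne_zero.2 Fintype.card_ne_zero), sub_self]

end Centering

theorem Matrix.posSemidef_neg_mul_mul {M P : Matrix ι ι ℝ} [Fintype ι] (hP : Pᵀ = P)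
    (hP1 : ∀ x, 1 ⬝ᵥ P *ᵥ x = 0)
    (hsymm : ∀ x y, 1 ⬝ᵥ x = 0 → 1 ⬝ᵥ y = 0 → x ⬝ᵥ M *ᵥ y = y ⬝ᵥ M *ᵥ x)
    (hneg : ∀ x, 1 ⬝ᵥ x = 0 → x ⬝ᵥ M *ᵥ x ≤ 0) : (-(P * M * P)).PosSemidef := by
  have hform : ∀ x y, x ⬝ᵥ (P * M * P) *ᵥ y = (P *ᵥ x) ⬝ᵥ M *ᵥ (P *ᵥ y) := fun x y => by
    rw [← mulVec_mulVec, ← mulVec_mulVec, ← dotProduct_transpose_mulVec, hP, dotProduct_comm]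
  have hsymm' : (P * M * P).IsSymm := ext_iff_mulVec.2 fun y => dotProduct_eq _ _ fun x => by
    rw [dotProduct_comm _ x, dotProduct_transpose_mulVec, dotProduct_comm _ x, hform, hform]
    exact hsymm _ _ (hP1 y) (hP1 x)
  refine .of_dotProduct_mulVec_nonneg (isHermitian_iff_isSymm.2 hsymm'.neg) fun x => ?_
  rw [star_trivial, neg_mulVec, dotProduct_neg, hform, neg_nonneg]
  exact hneg _ (hP1 x)

/-- For a nonzero GEDM `D`, the matrix `-P D† P` is symmetric positive semidefinite,
where `P = I - (1/n) J`; consequently `xᵀ D† x ≤ 0` whenever `x ⊥ 1`. -/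
theorem stmt14 (n : ℕ) (L D : Matrix (Fin n) (Fin n) ℝ) (hL : L.PosSemidef)
    (hL1 : L *ᵥ (fun _ => (1 : ℝ)) = 0) (hL0 : L ≠ 0)
    (a b : ℝ) (ha : 0 < a) (hb : 0 < b)
    (hD : ∀ i j, D i j = a ^ 2 * L i i + b ^ 2 * L j j - 2 * a * b * L i j)
    (Dp : Matrix (Fin n) (Fin n) ℝ) (hDp : IsMoorePenrose D Dp)
    (P : Matrix (Fin n) (Fin n) ℝ)
    (hP : P = (1 : Matrix (Fin n) (Fin n) ℝ) - (n : ℝ)⁻¹ • Matrix.of fun _ _ => (1 : ℝ)) :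
    (-(P * Dp * P)).PosSemidef ∧
    ∀ x : Fin n → ℝ, (fun _ => (1 : ℝ)) ⬝ᵥ x = 0 → x ⬝ᵥ (Dp *ᵥ x) ≤ 0 := by
  obtain rfl : D = gedm L a b := ext hD
  obtain rfl : P = centeringMatrix (Fin n) := by rw [hP, centeringMatrix, Fintype.card_fin]
  have := nonempty_of_ne_zero hL0
  have hneg := fun x (hx : 1 ⬝ᵥ x = 0) => dotProduct_pinv_mulVec_self_nonpos hL hL1 hL0 ha hb hDp hx
  refine ⟨posSemidef_neg_mul_mul (transpose_centeringMatrix _)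
    (one_dotProduct_centeringMatrix_mulVec _) (fun x y hx hy => ?_) hneg, hneg⟩
  exact dotProduct_pinv_mulVec_comm hL hL1 hL0 ha hb hDp hx hy
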